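/- Let s¹, s², s₁, s₂ ∈ ℝ. There exists an invertible real 2×2 matrix A with (det A) · (A (0,1)ᵀ) = (s¹, s²)ᵀ and (s₁, s₂) · ((det A) A) = (1, 0) if and only if (s¹, s²) ≠ (0,0), (s₁, s₂) ≠ (0,0), and s₁ s¹ + s₂ s² = 0. -/

import Mathlib

/-!
Only `C := det A • A` enters the equations: `C (0,1)ᵀ = (s¹, s²)ᵀ` and `(s₁, s₂) C = (1, 0)`.
Since `det C = (det A)³` and cubing is a bijection of `ℝ`, an invertible `A` exists iff an
invertible `C` does. For `C`, necessity is `s₁s¹ + s₂s² = (s₁, s₂) C (0,1)ᵀ = (1,0)·(0,1) = 0`;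
conversely a nonzero `(s₁, s₂) ⊥ (s¹, s²)` is a nonzero multiple of `(s², -s¹)`, which makes
the explicit witness `C` invertible.
-/

open Matrix

theorem Real.exists_pow_eq_of_odd {n : ℕ} (hn : Odd n) (x : ℝ) : ∃ t : ℝ, t ^ n = x := by
  rcases le_total 0 x with hx | hx
  · exact ⟨x ^ (n⁻¹ : ℝ), Real.rpow_inv_natCast_pow hx hn.pos.ne'⟩
  · refine ⟨-(-x) ^ (n⁻¹ : ℝ), ?_⟩
    rw [hn.neg_pow, Real.rpow_inv_natCast_pow (neg_nonneg.mpr hx) hn.pos.ne', neg_neg]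

namespace Matrix

variable {n : Type*} [Fintype n] [DecidableEq n]

theorem exists_det_smul_self_iff (hn : Even (Fintype.card n)) (P : Matrix n n ℝ → Prop) :
    (∃ A : Matrix n n ℝ, A.det ≠ 0 ∧ P (A.det • A)) ↔ ∃ C : Matrix n n ℝ, C.det ≠ 0 ∧ P C := by
  constructor
  · rintro ⟨A, hA, hP⟩
    exact ⟨A.det • A, by rw [det_smul]; exact mul_ne_zero (pow_ne_zero _ hA) hA, hP⟩
  · rintro ⟨C, hC, hP⟩
    obtain ⟨t, ht⟩ := Real.exists_pow_eq_of_odd hn.add_one C.det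
    have ht0 : t ≠ 0 := by rintro rfl; simp [eq_comm, hC] at ht
    have hdet : (t⁻¹ • C).det = t := by
      rw [det_smul, ← ht, inv_pow]
      field_simp
      ring
    exact ⟨t⁻¹ • C, by rwa [hdet], by rwa [hdet, smul_smul, mul_inv_cancel₀ ht0, one_smul]⟩

theorem ne_zero_and_dotProduct_eq_of_mulVec_of_vecMul {R : Type*} [CommRing R]
    [NoZeroDivisors R] {C : Matrix n n R} (hC : C.det ≠ 0) {x y u l : n → R} (hx : x ≠ 0)
    (hy : y ≠ 0) (hu : C *ᵥ x = u) (hl : l ᵥ* C = y) : u ≠ 0 ∧ l ≠ 0 ∧ l ⬝ᵥ u = y ⬝ᵥ x := by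
  refine ⟨?_, ?_, by rw [← hu, dotProduct_mulVec, hl]⟩
  · rintro rfl
    exact hx (eq_zero_of_mulVec_eq_zero hC hu)
  · rintro rfl
    exact hy (by rw [← hl, zero_vecMul])

end Matrix

theorem sq_add_sq_ne_zero_of_ne_zero_or {a b : ℝ} (h : a ≠ 0 ∨ b ≠ 0) : a ^ 2 + b ^ 2 ≠ 0 := by
  rcases h with h | h <;> positivity

theorem cross_ne_zero_of_dot_eq_zero {l₁ l₂ u₁ u₂ : ℝ} (hl : l₁ ≠ 0 ∨ l₂ ≠ 0)
    (hu : u₁ ≠ 0 ∨ u₂ ≠ 0) (hnull : l₁ * u₁ + l₂ * u₂ = 0) : l₁ * u₂ - l₂ * u₁ ≠ 0 := by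
  have lagrange : (l₁ * u₂ - l₂ * u₁) ^ 2 = (l₁ ^ 2 + l₂ ^ 2) * (u₁ ^ 2 + u₂ ^ 2) := by
    linear_combination (-(l₁ * u₁ + l₂ * u₂)) * hnull
  rw [← pow_ne_zero_iff two_ne_zero, lagrange]
  exact mul_ne_zero (sq_add_sq_ne_zero_of_ne_zero_or hl) (sq_add_sq_ne_zero_of_ne_zero_or hu)

theorem exists_det_ne_zero_mulVec_vecMul_of_dot_eq_zero {l₁ l₂ u₁ u₂ : ℝ}
    (hl : l₁ ≠ 0 ∨ l₂ ≠ 0) (hu : u₁ ≠ 0 ∨ u₂ ≠ 0) (hnull : l₁ * u₁ + l₂ * u₂ = 0) :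
    ∃ C : Matrix (Fin 2) (Fin 2) ℝ,
      C.det ≠ 0 ∧ C *ᵥ ![0, 1] = ![u₁, u₂] ∧ ![l₁, l₂] ᵥ* C = ![1, 0] := by
  set D := l₁ * u₂ - l₂ * u₁ with hD_def
  have hD : D ≠ 0 := cross_ne_zero_of_dot_eq_zero hl hu hnull
  -- the first column `(u₂, -u₁) / D` pairs with `l` to `1` and is orthogonal to `u`
  refine ⟨!![u₂ / D, u₁; -u₁ / D, u₂], ?_, ?_, ?_⟩
  · have hdet : (!![u₂ / D, u₁; -u₁ / D, u₂]).det = (u₁ ^ 2 + u₂ ^ 2) / D := by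
      rw [det_fin_two_of]
      ring
    rw [hdet]
    exact div_ne_zero (sq_add_sq_ne_zero_of_ne_zero_or hu) hD
  · ext i; fin_cases i <;> simp
  · ext i; fin_cases i
    · simp
      field_simp
      linear_combination hD_def.symm
    · simpa using hnull

theorem adapted_lift_solvability (su1 su2 sl1 sl2 : ℝ) :
    (∃ A : Matrix (Fin 2) (Fin 2) ℝ, A.det ≠ 0 ∧
        A.det • (A *ᵥ ![0, 1]) = ![su1, su2] ∧
        ![sl1, sl2] ᵥ* (A.det • A) = ![1, 0])
    ↔ ((su1 ≠ 0 ∨ su2 ≠ 0) ∧ (sl1 ≠ 0 ∨ sl2 ≠ 0) ∧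
        sl1 * su1 + sl2 * su2 = 0) := by
  simp_rw [← smul_mulVec]
  rw [exists_det_smul_self_iff (by simp)
    (fun C => C *ᵥ ![0, 1] = ![su1, su2] ∧ ![sl1, sl2] ᵥ* C = ![1, 0])]
  constructor
  · rintro ⟨C, hC, hu, hl⟩
    simpa [← not_and_or] using
      ne_zero_and_dotProduct_eq_of_mulVec_of_vecMul hC (by simp) (by simp) hu hl
  · rintro ⟨hu, hl, hnull⟩
    exact exists_det_ne_zero_mulVec_vecMul_of_dot_eq_zero hl hu hnull
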